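/- Let (F,G): A → B be an adjoint pair between locally small bicomplete abelian categories and (φ,ψ): Pr(A) → Pr(B) the induced Galois connection. If τ ∈ Pr(A) is idempotent then φ(τ) is idempotent, and if σ ∈ Pr(B) is a radical then ψ(σ) is a radical. -/

import Mathlib

open CategoryTheory CategoryTheory.Limits

universe u

/-- The product `τ·σ` of preradicals, represented by `σ ∘ τS : TS ⟶ 1`. -/
noncomputable def preradProd {C : Type u} [Category.{u} C] [Abelian C]
    (τ σ : Subobject (𝟭 C)) : Subobject (𝟭 C) :=
  imageSubobject
    ((Functor.whiskerLeft (σ : C ⥤ C) τ.arrow ≫ σ.arrow :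
      (σ : C ⥤ C) ⋙ (τ : C ⥤ C) ⟶ 𝟭 C))

/-- The coproduct `(σ:τ)` of preradicals: `Ker(1 ⟶ S* ⟶ T*S*)`. -/
noncomputable def preradCoprod {C : Type u} [Category.{u} C] [Abelian C]
    (σ τ : Subobject (𝟭 C)) : Subobject (𝟭 C) :=
  kernelSubobject
    (cokernel.π σ.arrow ≫ Functor.whiskerLeft (cokernel σ.arrow) (cokernel.π τ.arrow) :
      𝟭 C ⟶ cokernel σ.arrow ⋙ cokernel τ.arrow)

variable {A : Type u} [Category.{u} A] [Abelian A] [HasLimits A] [HasColimits A]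
  [WellPowered (A ⥤ A)]
variable {B : Type u} [Category.{u} B] [Abelian B] [HasLimits B] [HasColimits B]
  [WellPowered (B ⥤ B)]
variable (F : A ⥤ B) (G : B ⥤ A) (adj : F ⊣ G)

/-- `φ(τ) = Im(ε ∘ FτG)`. -/
noncomputable def preradPhi (τ : Subobject (𝟭 A)) : Subobject (𝟭 B) :=
  imageSubobject
    ((Functor.whiskerRight (Functor.whiskerLeft G τ.arrow) F ≫ adj.counit :
      (G ⋙ (τ : A ⥤ A)) ⋙ F ⟶ 𝟭 B))

/-- `ψ(σ) = Ker(Gσ*F ∘ η)`. -/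
noncomputable def preradPsi (σ : Subobject (𝟭 B)) : Subobject (𝟭 A) :=
  kernelSubobject
    ((adj.unit ≫ Functor.whiskerRight (Functor.whiskerLeft F (cokernel.π σ.arrow)) G :
      𝟭 A ⟶ (F ⋙ cokernel σ.arrow) ⋙ G))


/-! Idempotence of `τ` says that `τT : TT ⟶ T` is epi, and radicality of `σ` that
`S*σ* : S* ⟶ S*S*` is mono. The epimorphism `FTG ⟶ φ(τ)` transposes to `TG ⟶ Gφ(τ)`; by
naturality of `τ`, `FT` of it followed by `FTGφ(τ) ⟶ φ(τ)` equals `FτTG` followed by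
`FTG ⟶ φ(τ)`, which is epi because `τT` is. Hence `FTGφ(τ) ⟶ φ(τ)` is epi, and so is its factor
`φ(τ)φ(τ) ⟶ φ(τ)`. Dually, the monomorphism `ψ(σ)* ⟶ GS*F` transposes to `Fψ(σ)* ⟶ S*F`, and
`σ*S*F` being mono makes `ψ(σ)* ⟶ ψ(σ)*ψ(σ)*` mono. -/

section Abelian

variable {C : Type*} [Category C] [Abelian C]

lemma imageSubobject_comp_eq_mk_of_epi {X Y Z : C} (f : X ⟶ Y) (g : Y ⟶ Z) [Epi f] [Mono g] :
    imageSubobject (f ≫ g) = Subobject.mk g := by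
  have : StrongEpi f := strongEpi_of_epi f
  exact Subobject.mk_eq_mk_of_comm _ _ (image.isoStrongEpiMono f g rfl).symm
    (image.isoStrongEpiMono_inv_comp_mono f g rfl)

lemma epi_of_imageSubobject_comp_eq_mk {X Y Z : C} (f : X ⟶ Y) (g : Y ⟶ Z) [Mono g]
    (h : imageSubobject (f ≫ g) = Subobject.mk g) : Epi f := by
  have hf : factorThruImageSubobject (f ≫ g) ≫ (Subobject.isoOfEqMk _ g h).hom = f := by
    simp [← cancel_mono g, Subobject.isoOfEqMk, imageSubobject_arrow_comp]
  rw [← hf]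
  infer_instance

lemma mono_of_kernelSubobject_comp_eq {X Y Z : C} (f : X ⟶ Y) (g : Y ⟶ Z) [Epi f]
    (h : kernelSubobject (f ≫ g) = kernelSubobject f) : Mono g := by
  refine Preadditive.mono_of_cancel_zero _ fun {K} k hk => ?_
  -- pull `k` back along the epimorphism `f`, where it lands in `ker (f ≫ g) = ker f`
  have hfg : pullback.fst f k ≫ f ≫ g = 0 := by
    rw [← Category.assoc, pullback.condition, Category.assoc, hk, comp_zero]
  have hf : pullback.fst f k ≫ f = 0 := by
    rw [← factorThruKernelSubobject_comp_arrow _ _ hfg, ← Subobject.ofLE_arrow h.le,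
      Category.assoc, Category.assoc, kernelSubobject_arrow_comp, comp_zero, comp_zero]
  rw [← cancel_epi (pullback.snd f k), ← pullback.condition, hf, comp_zero]

lemma kernelSubobject_cokernel_π {X Y : C} (s : X ⟶ Y) [Mono s] :
    kernelSubobject (cokernel.π s) = Subobject.mk s := by
  apply le_antisymm
  · exact Subobject.le_mk_of_comm
      (Abelian.monoLift s (kernelSubobject (cokernel.π s)).arrow (kernelSubobject_arrow_comp _))
      (Abelian.monoLift_comp _ _ _)
  · apply le_kernelSubobject
    rw [← Subobject.underlyingIso_hom_comp_eq_mk, Category.assoc, cokernel.condition, comp_zero]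

end Abelian

section Preradical

variable {C : Type u} [Category.{u} C] [Abelian C]

lemma preradProd_self_eq_iff_epi (τ : Subobject (𝟭 C)) :
    preradProd τ τ = τ ↔ Epi (Functor.whiskerLeft (τ : C ⥤ C) τ.arrow) := by
  conv_lhs => rhs; rw [← Subobject.mk_arrow τ]
  exact ⟨epi_of_imageSubobject_comp_eq_mk _ _, fun _ => imageSubobject_comp_eq_mk_of_epi _ _⟩

lemma preradCoprod_self_eq_iff_mono (σ : Subobject (𝟭 C)) :
    preradCoprod σ σ = σ ↔
      Mono (Functor.whiskerLeft (cokernel σ.arrow) (cokernel.π σ.arrow)) := by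
  have hσ : kernelSubobject (cokernel.π σ.arrow) = σ := by
    rw [kernelSubobject_cokernel_π, Subobject.mk_arrow]
  conv_lhs => rhs; rw [← hσ]
  exact ⟨mono_of_kernelSubobject_comp_eq _ _, fun _ => kernelSubobject_comp_mono _ _⟩

end Preradical

section Adjunction

variable {C D : Type*} [Category C] [Category D] {L : C ⥤ D} {R : D ⥤ C} (adj' : L ⊣ R)

/-- The map `ε ∘ LtR : LTR ⟶ 1` whose image is `φ(τ)` when `t = τ.arrow`. -/
def phiMap {T : C ⥤ C} (t : T ⟶ 𝟭 C) : (R ⋙ T) ⋙ L ⟶ 𝟭 D :=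
  Functor.whiskerRight (Functor.whiskerLeft R t) L ≫ adj'.counit

/-- The map `RsL ∘ η : 1 ⟶ RSL` whose kernel is `ψ(σ)` when `s = cokernel.π σ.arrow`. -/
def psiMap {S : D ⥤ D} (s : 𝟭 D ⟶ S) : 𝟭 C ⟶ (L ⋙ S) ⋙ R :=
  adj'.unit ≫ Functor.whiskerRight (Functor.whiskerLeft L s) R

lemma whiskerRight_transpose_comp_whiskerLeft_phiMap {T : C ⥤ C} (t : T ⟶ 𝟭 C)
    {Φ : D ⥤ D} (e : (R ⋙ T) ⋙ L ⟶ Φ) :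
    Functor.whiskerRight (Functor.whiskerLeft (R ⋙ T) adj'.unit ≫ Functor.whiskerRight e R)
        (T ⋙ L) ≫ Functor.whiskerLeft Φ (phiMap adj' t) =
      (Functor.whiskerRight (Functor.whiskerLeft (R ⋙ T) t) L ≫ e :
        ((R ⋙ T) ⋙ T) ⋙ L ⟶ Φ) := by
  ext M
  have ht := t.naturality (adj'.unit.app (T.obj (R.obj M)) ≫ R.map (e.app M))
  dsimp [phiMap] at ht ⊢
  rw [← L.map_comp_assoc, ht]
  simp

lemma whiskerLeft_psiMap_comp_whiskerRight_transpose {S : D ⥤ D} (s : 𝟭 D ⟶ S)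
    {Q : C ⥤ C} (m : Q ⟶ (L ⋙ S) ⋙ R) :
    Functor.whiskerLeft Q (psiMap adj' s) ≫
        Functor.whiskerRight (Functor.whiskerRight m L ≫ Functor.whiskerLeft (L ⋙ S) adj'.counit)
          (S ⋙ R) =
      (m ≫ Functor.whiskerRight (Functor.whiskerLeft (L ⋙ S) s) R :
        Q ⟶ ((L ⋙ S) ⋙ S) ⋙ R) := by
  ext X
  have hs := s.naturality (L.map (m.app X) ≫ adj'.counit.app (S.obj (L.obj X)))
  dsimp [psiMap] at hs ⊢
  rw [Category.assoc, ← R.map_comp, ← hs]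
  simp

variable [Abelian C] [Abelian D]

lemma epi_whiskerLeft_imageSubobject_phiMap_arrow {T : C ⥤ C} (t : T ⟶ 𝟭 C)
    [Epi (Functor.whiskerLeft T t)] :
    Epi (Functor.whiskerLeft (imageSubobject (phiMap adj' t) : D ⥤ D)
      (imageSubobject (phiMap adj' t)).arrow) := by
  set q := phiMap adj' t
  set Φ : D ⥤ D := (imageSubobject q : D ⥤ D)
  have : ∀ M, Epi ((Functor.whiskerLeft (R ⋙ T) t).app M) := fun M =>
    inferInstanceAs (Epi ((Functor.whiskerLeft T t).app (R.obj M)))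
  have : Epi (Functor.whiskerLeft (R ⋙ T) t) := NatTrans.epi_of_epi_app _
  have : L.PreservesEpimorphisms := L.preservesEpimorphisms_of_adjunction adj'
  have hq : Epi (Functor.whiskerLeft Φ q) :=
    epi_of_epi_fac
      (whiskerRight_transpose_comp_whiskerLeft_phiMap adj' t (factorThruImageSubobject q))
  have hfac : Functor.whiskerLeft Φ (factorThruImageSubobject q) ≫
      Functor.whiskerLeft Φ (imageSubobject q).arrow = Functor.whiskerLeft Φ q := by
    rw [← Functor.whiskerLeft_comp, imageSubobject_arrow_comp]
  rw [← hfac] at hq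
  exact epi_of_epi (Functor.whiskerLeft Φ (factorThruImageSubobject q)) _

lemma mono_whiskerLeft_cokernel_kernelSubobject_psiMap {S : D ⥤ D} (s : 𝟭 D ⟶ S)
    [Mono (Functor.whiskerLeft S s)] :
    Mono (Functor.whiskerLeft (cokernel (kernelSubobject (psiMap adj' s)).arrow)
      (cokernel.π (kernelSubobject (psiMap adj' s)).arrow)) := by
  set r := psiMap adj' s
  set Q := cokernel (kernelSubobject r).arrow
  set m := cokernel.desc _ r (kernelSubobject_arrow_comp r)
  have hm : cokernel.π (kernelSubobject r).arrow ≫ m = r := cokernel.π_desc _ _ _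
  have : Mono m := by
    refine mono_of_kernelSubobject_comp_eq (cokernel.π (kernelSubobject r).arrow) m ?_
    rw [hm, kernelSubobject_cokernel_π, Subobject.mk_arrow]
  have : ∀ X, Mono ((Functor.whiskerLeft (L ⋙ S) s).app X) := fun X =>
    inferInstanceAs (Mono ((Functor.whiskerLeft S s).app (L.obj X)))
  have : Mono (Functor.whiskerLeft (L ⋙ S) s) := NatTrans.mono_of_mono_app _
  have : R.PreservesMonomorphisms := R.preservesMonomorphisms_of_adjunction adj'
  have hr : Mono (Functor.whiskerLeft Q r) :=
    mono_of_mono_fac (whiskerLeft_psiMap_comp_whiskerRight_transpose adj' s m)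
  have hfac : Functor.whiskerLeft Q (cokernel.π (kernelSubobject r).arrow) ≫
      Functor.whiskerLeft Q m = Functor.whiskerLeft Q r := by
    rw [← Functor.whiskerLeft_comp, hm]
  rw [← hfac] at hr
  exact mono_of_mono _ (Functor.whiskerLeft Q m)

end Adjunction

/-- In the Galois connection induced by an adjoint pair between locally small
bicomplete abelian categories, `φ` preserves idempotent preradicals and `ψ`
preserves radicals. -/
theorem preradPhi_idempotent_and_preradPsi_radical
    (τ : Subobject (𝟭 A)) (σ : Subobject (𝟭 B)) :
    (preradProd τ τ = τ →
      preradProd (preradPhi F G adj τ) (preradPhi F G adj τ) = preradPhi F G adj τ) ∧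
    (preradCoprod σ σ = σ →
      preradCoprod (preradPsi F G adj σ) (preradPsi F G adj σ) = preradPsi F G adj σ) := by
  simp only [preradProd_self_eq_iff_epi, preradCoprod_self_eq_iff_mono]
  exact ⟨fun _ => epi_whiskerLeft_imageSubobject_phiMap_arrow adj τ.arrow,
    fun _ => mono_whiskerLeft_cokernel_kernelSubobject_psiMap adj (cokernel.π σ.arrow)⟩
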